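/- Under the hypotheses of the main theorem, for every X ⊆ λ, either some B_{α,β,Y} ∈ ℬ satisfies B_{α,β,Y} ⊆ X, or some B_{α,β,Y} ∈ ℬ satisfies B_{α,β,Y} ⊆ λ \ X. Hence the filter generated by ℬ is an ultrafilter on λ. -/

import Mathlib

/-!
Given `E`-many `i` with `T_i ∈ U_i`, first pick `β` with `A_{i, g_β(i)} ⊆* T_i`: the `A_{i,α}`
generate `U_i` and are `⊆*`-decreasing, and `g` is cofinal. The exceptional sets
`A_{i, g_β(i)} \ T_i` have size `< λ_i`, so by regularity they are bounded below `λ_i`, and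
cofinality of `f` gives `α` with `f_α(i)` above these bounds. Then every piece of `B_{α,β,Y}`
lies in the corresponding `T_i`. Taking `T_i = X ∩ λ_i` or `T_i = λ_i \ X`, according to which
of the two lies in `U_i` for `E`-many `i`, gives the dichotomy; taking `T_i` the intersection
of the pieces of two `B`'s shows that the `B`'s are downward directed, and they are nonempty
because the blocks `[λ_{<i}, λ_i)` are `U_i`-large for `E`-almost all `i`.
-/

open Cardinal Set

/-- `U` is an ultrafilter on the set of ordinals `S`. -/
def IsUltrafilterOn (S : Set Ordinal.{0}) (U : Set (Set Ordinal.{0})) : Prop :=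
  (∀ A ∈ U, A ⊆ S) ∧ S ∈ U ∧ ∅ ∉ U ∧
    (∀ A ∈ U, ∀ B ∈ U, A ∩ B ∈ U) ∧
    (∀ A ∈ U, ∀ B, A ⊆ B → B ⊆ S → B ∈ U) ∧
    (∀ A, A ⊆ S → A ∈ U ∨ S \ A ∈ U)

/-- `s` has cardinality `< μ`. -/
def cardLT (s : Set Ordinal.{0}) (μ : Cardinal.{0}) : Prop := #s < Cardinal.lift.{1,0} μ

/-- `s` has cardinality `μ`. -/
def cardEQ (s : Set Ordinal.{0}) (μ : Cardinal.{0}) : Prop := #s = Cardinal.lift.{1,0} μ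


/-- `λ_{<i} = sup{λ_j : j < i}` (as an ordinal). -/
noncomputable def lamlt (lam_ : Ordinal.{0} → Cardinal.{0}) (i : Ordinal.{0}) : Ordinal.{0} :=
  sSup ((fun j => (lam_ j).ord) '' Set.Iio i)

/-- `B_{α,β,Y} = {ζ < λ : ∃ i ∈ Y (λ_{<i} ≤ ζ < λ_i ∧ ζ ∈ A_{i,g_β(i)} ∧ ζ > f_α(i))}`. -/
def Bset (lam_ : Ordinal.{0} → Cardinal.{0}) (A : Ordinal.{0} → Ordinal.{0} → Set Ordinal.{0})
    (f g : Ordinal.{0} → Ordinal.{0} → Ordinal.{0}) (α β : Ordinal.{0})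
    (Y : Set Ordinal.{0}) : Set Ordinal.{0} :=
  {ζ | ∃ i ∈ Y, lamlt lam_ i ≤ ζ ∧ ζ < (lam_ i).ord ∧ ζ ∈ A i (g β i) ∧ f α i < ζ}

lemma cardLT_Iio {x : Ordinal.{0}} {μ : Cardinal.{0}} : cardLT (Iio x) μ ↔ x < μ.ord := by
  rw [cardLT, Cardinal.mk_Iio_ordinal, lift_lt, lt_ord]

lemma cardLT_diff_trans {a b c : Set Ordinal.{0}} {μ : Cardinal.{0}} (hμ : ℵ₀ ≤ μ)
    (hab : cardLT (a \ b) μ) (hbc : cardLT (b \ c) μ) : cardLT (a \ c) μ :=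
  calc #(a \ c : Set _) ≤ #(a \ b ∪ b \ c : Set _) := mk_le_mk_of_subset (sdiff_triangle a b c)
    _ ≤ #(a \ b : Set _) + #(b \ c : Set _) := mk_union_le _ _
    _ < _ := add_lt_of_lt (aleph0_le_lift.2 hμ) hab hbc

lemma sSup_lt_ord_of_isRegular {s : Set Ordinal.{0}} {c : Cardinal.{0}} (hc : c.IsRegular)
    (hs : s ⊆ Iio c.ord) (hcard : cardLT s c) : sSup s < c.ord :=
  Ordinal.sSup_lt_of_lt_cof (by rwa [lift_ord, hc.lift.cof_ord]) hs

namespace IsUltrafilterOn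

variable {S : Set Ordinal.{0}} {U : Set (Set Ordinal.{0})}

lemma nonempty_of_mem (hU : IsUltrafilterOn S U) {X : Set Ordinal.{0}} (hX : X ∈ U) :
    X.Nonempty :=
  nonempty_iff_ne_empty.2 fun h => hU.2.2.1 (h ▸ hX)

lemma inter_mem_or_diff_mem (hU : IsUltrafilterOn S U) (X : Set Ordinal.{0}) :
    X ∩ S ∈ U ∨ S \ X ∈ U := by
  simpa only [sdiff_inter_self_eq_sdiff] using hU.2.2.2.2.2 (X ∩ S) inter_subset_right

lemma diff_mem_of_cardLT {μ : Cardinal.{0}} (hU : IsUltrafilterOn S U)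
    (huni : ∀ X ∈ U, cardEQ X μ) {s : Set Ordinal.{0}} (hs : s ⊆ S) (hcard : cardLT s μ) :
    S \ s ∈ U :=
  (hU.2.2.2.2.2 s hs).resolve_left fun h => hcard.ne (huni s h)

lemma Ico_mem {μ : Cardinal.{0}} (hU : IsUltrafilterOn (Iio μ.ord) U)
    (huni : ∀ X ∈ U, cardEQ X μ) {x : Ordinal.{0}} (hx : x < μ.ord) : Ico x μ.ord ∈ U := by
  have hIco : Ico x μ.ord = Iio μ.ord \ Iio x := by ext; simp
  rw [hIco]
  exact hU.diff_mem_of_cardLT huni (Iio_subset_Iio hx.le) (cardLT_Iio.2 hx)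

lemma Ioo_mem {μ : Cardinal.{0}} (hU : IsUltrafilterOn (Iio μ.ord) U)
    (huni : ∀ X ∈ U, cardEQ X μ) (hμ : ℵ₀ ≤ μ) {x : Ordinal.{0}} (hx : x < μ.ord) :
    Ioo x μ.ord ∈ U := by
  rw [← Order.Ico_succ_left]
  exact hU.Ico_mem huni ((isSuccLimit_ord hμ).succ_lt hx)

lemma of_base {ℬ : Set (Set Ordinal.{0})} (hne : ∀ B ∈ ℬ, B.Nonempty)
    (hdir : ∀ B₁ ∈ ℬ, ∀ B₂ ∈ ℬ, ∃ B ∈ ℬ, B ⊆ B₁ ∩ B₂)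
    (hdich : ∀ X ⊆ S, (∃ B ∈ ℬ, B ⊆ X) ∨ ∃ B ∈ ℬ, B ⊆ S \ X) :
    IsUltrafilterOn S {X | X ⊆ S ∧ ∃ B ∈ ℬ, B ⊆ X} := by
  have hempty : ∀ B ∈ ℬ, ¬B ⊆ ∅ := fun B hB h => (hne B hB).ne_empty (subset_empty_iff.1 h)
  refine ⟨fun X hX => hX.1, ?_, fun ⟨_, B, hB, h⟩ => hempty B hB h, ?_, ?_, ?_⟩
  · obtain h | ⟨B, hB, h⟩ := hdich S subset_rfl
    · exact ⟨subset_rfl, h⟩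
    · exact (hempty B hB (sdiff_self (s := S) ▸ h)).elim
  · rintro X₁ ⟨hX₁, B₁, hB₁, h₁⟩ X₂ ⟨-, B₂, hB₂, h₂⟩
    obtain ⟨B, hB, h⟩ := hdir B₁ hB₁ B₂ hB₂
    exact ⟨inter_subset_left.trans hX₁, B, hB, h.trans (inter_subset_inter h₁ h₂)⟩
  · rintro X ⟨-, B, hB, h⟩ Y hXY hY
    exact ⟨hY, B, hB, h.trans hXY⟩
  · intro X hX
    exact (hdich X hX).imp (fun h => ⟨hX, h⟩) fun h => ⟨sdiff_subset, h⟩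

end IsUltrafilterOn

section Scales

variable {κ χlam χθ : Cardinal.{0}} {lam_ θ : Ordinal.{0} → Cardinal.{0}}
  {E : Set (Set Ordinal.{0})} {U : Ordinal.{0} → Set (Set Ordinal.{0})}
  {A : Ordinal.{0} → Ordinal.{0} → Set Ordinal.{0}} {f g : Ordinal.{0} → Ordinal.{0} → Ordinal.{0}}

lemma lamlt_lt_ord {i : Ordinal.{0}} (hreg : (lam_ i).IsRegular)
    (hmono : ∀ j < i, lam_ j < lam_ i) (hi : i.card < lam_ i) : lamlt lam_ i < (lam_ i).ord := by
  refine sSup_lt_ord_of_isRegular hreg ?_ ?_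
  · rintro _ ⟨j, hj, rfl⟩
    exact ord_lt_ord.2 (hmono j hj)
  · calc #((fun j => (lam_ j).ord) '' Iio i) ≤ #(Iio i) := mk_image_le
      _ < lift (lam_ i) := cardLT_Iio.2 (lt_ord.2 hi)

lemma exists_mem_forall_Ico_lamlt_mem (hE : IsUltrafilterOn (Iio κ.ord) E)
    (hEuni : ∀ Y ∈ E, cardEQ Y κ) (hκ : ℵ₀ ≤ κ)
    (hU : ∀ i < κ.ord, IsUltrafilterOn (Iio (lam_ i).ord) (U i))
    (hUuni : ∀ i < κ.ord, ∀ X ∈ U i, cardEQ X (lam_ i))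
    (hreg : ∀ i < κ.ord, (lam_ i).IsRegular)
    (hmono : ∀ i j, i < j → j < κ.ord → lam_ i < lam_ j)
    (hcofinal : ∃ i < κ.ord, κ ≤ lam_ i) :
    ∃ Y ∈ E, ∀ i ∈ Y, Ico (lamlt lam_ i) (lam_ i).ord ∈ U i := by
  obtain ⟨i₀, hi₀, hκi₀⟩ := hcofinal
  refine ⟨Ioo i₀ κ.ord, hE.Ioo_mem hEuni hκ hi₀, fun i ⟨hi₀i, hi⟩ => ?_⟩
  refine (hU i hi).Ico_mem (hUuni i hi)
    (lamlt_lt_ord (hreg i hi) (fun j hj => hmono j i hj hi) ?_)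
  calc i.card < κ := lt_ord.1 hi
    _ ≤ lam_ i₀ := hκi₀
    _ < lam_ i := hmono i₀ i hi₀i hi

lemma exists_scale_index_diff_cardLT (hE : IsUltrafilterOn (Iio κ.ord) E)
    (hU : ∀ i < κ.ord, IsUltrafilterOn (Iio (lam_ i).ord) (U i))
    (hinf : ∀ i < κ.ord, ℵ₀ ≤ lam_ i)
    (hAdec : ∀ i < κ.ord, ∀ α α', α < α' → α' < (θ i).ord →
      cardLT (A i α' \ A i α) (lam_ i))
    (hAgen : ∀ i < κ.ord, ∀ B ∈ U i, ∃ α < (θ i).ord, cardLT (A i α \ B) (lam_ i))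
    (hg : ∀ β < χθ.ord, ∀ i < κ.ord, g β i < (θ i).ord)
    (hgcof : ∀ h : Ordinal.{0} → Ordinal.{0}, (∀ i < κ.ord, h i < (θ i).ord) →
      ∃ β < χθ.ord, {i | i < κ.ord ∧ h i < g β i} ∈ E)
    {Y₀ : Set Ordinal.{0}} (hY₀ : Y₀ ∈ E) {T : Ordinal.{0} → Set Ordinal.{0}}
    (hT : ∀ i ∈ Y₀, i < κ.ord → T i ∈ U i) :
    ∃ β < χθ.ord, ∃ Y ∈ E, Y ⊆ Y₀ ∧ ∀ i ∈ Y, cardLT (A i (g β i) \ T i) (lam_ i) := by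
  have hb : ∀ i < κ.ord, ∃ b < (θ i).ord, i ∈ Y₀ → cardLT (A i b \ T i) (lam_ i) := by
    intro i hi
    by_cases hiY : i ∈ Y₀
    · obtain ⟨b, hb, hbT⟩ := hAgen i hi (T i) (hT i hiY hi)
      exact ⟨b, hb, fun _ => hbT⟩
    · obtain ⟨b, hb, -⟩ := hAgen i hi _ (hU i hi).2.1
      exact ⟨b, hb, fun h => absurd h hiY⟩
  choose! b hbθ hbT using hb
  obtain ⟨β, hβ, hbβ⟩ := hgcof b hbθ
  refine ⟨β, hβ, _, hE.2.2.2.1 _ hY₀ _ hbβ, inter_subset_left, fun i ⟨hiY, hi, hbi⟩ => ?_⟩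
  exact cardLT_diff_trans (hinf i hi) (hAdec i hi _ _ hbi (hg β hβ i hi)) (hbT i hi hiY)

lemma exists_scale_index_disjoint (hE : IsUltrafilterOn (Iio κ.ord) E)
    (hreg : ∀ i < κ.ord, (lam_ i).IsRegular)
    (hfcof : ∀ h : Ordinal.{0} → Ordinal.{0}, (∀ i < κ.ord, h i < (lam_ i).ord) →
      ∃ α < χlam.ord, {i | i < κ.ord ∧ h i < f α i} ∈ E)
    {Y₀ : Set Ordinal.{0}} (hY₀ : Y₀ ∈ E) {s : Ordinal.{0} → Set Ordinal.{0}}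
    (hs : ∀ i ∈ Y₀, cardLT (s i) (lam_ i)) :
    ∃ α < χlam.ord, ∃ Y ∈ E, Y ⊆ Y₀ ∧ ∀ i ∈ Y, Disjoint (s i) (Ioo (f α i) (lam_ i).ord) := by
  classical
  let h : Ordinal.{0} → Ordinal.{0} := fun i =>
    if i ∈ Y₀ then sSup (s i ∩ Iio (lam_ i).ord) else 0
  have hh : ∀ i < κ.ord, h i < (lam_ i).ord := by
    intro i hi
    by_cases hiY : i ∈ Y₀
    · simp only [h, if_pos hiY]
      exact sSup_lt_ord_of_isRegular (hreg i hi) inter_subset_right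
        ((mk_le_mk_of_subset inter_subset_left).trans_lt (hs i hiY))
    · simp only [h, if_neg hiY]
      exact (isSuccLimit_ord (hreg i hi).aleph0_le).bot_lt
  obtain ⟨α, hα, hfα⟩ := hfcof h hh
  refine ⟨α, hα, _, hE.2.2.2.1 _ hY₀ _ hfα, inter_subset_left, fun i ⟨hiY, _, hhf⟩ => ?_⟩
  refine disjoint_left.2 fun ζ hζs ⟨hfζ, hζ⟩ => ?_
  have hζh : ζ ≤ h i := by
    simp only [h, if_pos hiY]
    exact le_csSup (bddAbove_Iio.mono inter_subset_right) ⟨hζs, hζ⟩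
  exact (hζh.trans_lt (hhf.trans hfζ)).false

/-- `A i (g β i) ∩ (f α i, λ_i)` is the `i`-th piece of `B_{α,β,Y}` before it is cut down to
`[λ_{<i}, λ_i)`. -/
def PiecesRefine (κ χlam χθ : Cardinal.{0}) (lam_ : Ordinal.{0} → Cardinal.{0})
    (E : Set (Set Ordinal.{0})) (U : Ordinal.{0} → Set (Set Ordinal.{0}))
    (A : Ordinal.{0} → Ordinal.{0} → Set Ordinal.{0})
    (f g : Ordinal.{0} → Ordinal.{0} → Ordinal.{0}) : Prop :=
  ∀ Y₀ ∈ E, ∀ T : Ordinal.{0} → Set Ordinal.{0}, (∀ i ∈ Y₀, i < κ.ord → T i ∈ U i) →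
    ∃ α < χlam.ord, ∃ β < χθ.ord, ∃ Y ∈ E, Y ⊆ Y₀ ∧
      ∀ i ∈ Y, A i (g β i) ∩ Ioo (f α i) (lam_ i).ord ⊆ T i

lemma piecesRefine_of_scales (hE : IsUltrafilterOn (Iio κ.ord) E)
    (hU : ∀ i < κ.ord, IsUltrafilterOn (Iio (lam_ i).ord) (U i))
    (hreg : ∀ i < κ.ord, (lam_ i).IsRegular)
    (hAdec : ∀ i < κ.ord, ∀ α α', α < α' → α' < (θ i).ord →
      cardLT (A i α' \ A i α) (lam_ i))
    (hAgen : ∀ i < κ.ord, ∀ B ∈ U i, ∃ α < (θ i).ord, cardLT (A i α \ B) (lam_ i))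
    (hfcof : ∀ h : Ordinal.{0} → Ordinal.{0}, (∀ i < κ.ord, h i < (lam_ i).ord) →
      ∃ α < χlam.ord, {i | i < κ.ord ∧ h i < f α i} ∈ E)
    (hg : ∀ β < χθ.ord, ∀ i < κ.ord, g β i < (θ i).ord)
    (hgcof : ∀ h : Ordinal.{0} → Ordinal.{0}, (∀ i < κ.ord, h i < (θ i).ord) →
      ∃ β < χθ.ord, {i | i < κ.ord ∧ h i < g β i} ∈ E) :
    PiecesRefine κ χlam χθ lam_ E U A f g := by
  intro Y₀ hY₀ T hT
  obtain ⟨β, hβ, Y₁, hY₁, hY₁₀, hsmall⟩ := exists_scale_index_diff_cardLT hE hU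
    (fun i hi => (hreg i hi).aleph0_le) hAdec hAgen hg hgcof hY₀ hT
  obtain ⟨α, hα, Y, hY, hYY₁, hdisj⟩ := exists_scale_index_disjoint hE hreg hfcof hY₁ hsmall
  refine ⟨α, hα, β, hβ, Y, hY, hYY₁.trans hY₁₀, fun i hi ζ ⟨hA, hζ⟩ => ?_⟩
  by_contra hζT
  exact disjoint_left.1 (hdisj i hi) ⟨hA, hζT⟩ hζ

lemma Bset_subset_of_forall_subset {α β : Ordinal.{0}} {Y X : Set Ordinal.{0}}
    (h : ∀ i ∈ Y, A i (g β i) ∩ Ioo (f α i) (lam_ i).ord ⊆ X) : Bset lam_ A f g α β Y ⊆ X :=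
  fun _ ⟨i, hi, _, hlt, hA, hf⟩ => h i hi ⟨hA, hf, hlt⟩

lemma Bset_mono {α β α' β' : Ordinal.{0}} {Y Y' : Set Ordinal.{0}} (hY : Y ⊆ Y')
    (h : ∀ i ∈ Y,
      A i (g β i) ∩ Ioo (f α i) (lam_ i).ord ⊆ A i (g β' i) ∩ Ioo (f α' i) (lam_ i).ord) :
    Bset lam_ A f g α β Y ⊆ Bset lam_ A f g α' β' Y' := by
  rintro ζ ⟨i, hi, hl, hlt, hA, hf⟩
  obtain ⟨hA', hf', -⟩ := h i hi ⟨hA, hf, hlt⟩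
  exact ⟨i, hY hi, hl, hlt, hA', hf'⟩

lemma Bset_dichotomy {lam : Cardinal.{0}} (hrefine : PiecesRefine κ χlam χθ lam_ E U A f g)
    (hE : IsUltrafilterOn (Iio κ.ord) E)
    (hU : ∀ i < κ.ord, IsUltrafilterOn (Iio (lam_ i).ord) (U i))
    (hlt : ∀ i < κ.ord, lam_ i < lam) (X : Set Ordinal.{0}) :
    (∃ α < χlam.ord, ∃ β < χθ.ord, ∃ Y ∈ E, Bset lam_ A f g α β Y ⊆ X) ∨
      (∃ α < χlam.ord, ∃ β < χθ.ord, ∃ Y ∈ E, Bset lam_ A f g α β Y ⊆ Iio lam.ord \ X) := by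
  let W := {i | i < κ.ord ∧ X ∩ Iio (lam_ i).ord ∈ U i}
  rcases hE.2.2.2.2.2 W fun i hi => hi.1 with hW | hW
  · obtain ⟨α, hα, β, hβ, Y, hY, -, hT⟩ := hrefine W hW _ fun i hi _ => hi.2
    exact Or.inl ⟨α, hα, β, hβ, Y, hY,
      Bset_subset_of_forall_subset fun i hi => (hT i hi).trans inter_subset_left⟩
  · obtain ⟨α, hα, β, hβ, Y, hY, hYW, hT⟩ := hrefine _ hW (fun i => Iio (lam_ i).ord \ X)
      fun i hi hiκ => ((hU i hiκ).inter_mem_or_diff_mem X).resolve_left fun h => hi.2 ⟨hiκ, h⟩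
    refine Or.inr ⟨α, hα, β, hβ, Y, hY, Bset_subset_of_forall_subset fun i hi => ?_⟩
    exact (hT i hi).trans
      (sdiff_subset_sdiff_left (Iio_subset_Iio (ord_lt_ord.2 (hlt i (hYW hi).1)).le))

lemma Bset_nonempty {α β : Ordinal.{0}} {Y₀ Y : Set Ordinal.{0}}
    (hE : IsUltrafilterOn (Iio κ.ord) E)
    (hU : ∀ i < κ.ord, IsUltrafilterOn (Iio (lam_ i).ord) (U i))
    (hpiece : ∀ i < κ.ord, A i (g β i) ∩ Ioo (f α i) (lam_ i).ord ∈ U i)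
    (hY₀ : Y₀ ∈ E) (hblock : ∀ i ∈ Y₀, Ico (lamlt lam_ i) (lam_ i).ord ∈ U i) (hY : Y ∈ E) :
    (Bset lam_ A f g α β Y).Nonempty := by
  obtain ⟨i, hiY, hiY₀⟩ := hE.nonempty_of_mem (hE.2.2.2.1 Y hY Y₀ hY₀)
  have hi : i < κ.ord := hE.1 Y hY hiY
  obtain ⟨ζ, ⟨hl, -⟩, hA, hf, hlt⟩ :=
    (hU i hi).nonempty_of_mem ((hU i hi).2.2.2.1 _ (hblock i hiY₀) _ (hpiece i hi))
  exact ⟨ζ, i, hiY, hl, hlt, hA, hf⟩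

lemma Bset_directed {α₁ β₁ α₂ β₂ : Ordinal.{0}} {Y₁ Y₂ : Set Ordinal.{0}}
    (hrefine : PiecesRefine κ χlam χθ lam_ E U A f g) (hE : IsUltrafilterOn (Iio κ.ord) E)
    (hU : ∀ i < κ.ord, IsUltrafilterOn (Iio (lam_ i).ord) (U i))
    (hpiece₁ : ∀ i < κ.ord, A i (g β₁ i) ∩ Ioo (f α₁ i) (lam_ i).ord ∈ U i)
    (hpiece₂ : ∀ i < κ.ord, A i (g β₂ i) ∩ Ioo (f α₂ i) (lam_ i).ord ∈ U i)
    (hY₁ : Y₁ ∈ E) (hY₂ : Y₂ ∈ E) :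
    ∃ α < χlam.ord, ∃ β < χθ.ord, ∃ Y ∈ E,
      Bset lam_ A f g α β Y ⊆ Bset lam_ A f g α₁ β₁ Y₁ ∩ Bset lam_ A f g α₂ β₂ Y₂ := by
  obtain ⟨α, hα, β, hβ, Y, hY, hY₁₂, hT⟩ := hrefine _ (hE.2.2.2.1 _ hY₁ _ hY₂) _
    fun i _ hi => (hU i hi).2.2.2.1 _ (hpiece₁ i hi) _ (hpiece₂ i hi)
  exact ⟨α, hα, β, hβ, Y, hY, subset_inter
    (Bset_mono (fun i hi => (hY₁₂ hi).1) fun i hi => (hT i hi).trans inter_subset_left)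
    (Bset_mono (fun i hi => (hY₁₂ hi).2) fun i hi => (hT i hi).trans inter_subset_right)⟩

end Scales

theorem stmt7_general (lam κ χlam χθ : Cardinal.{0})
    (lam_ θ : Ordinal.{0} → Cardinal.{0})
    (E : Set (Set Ordinal.{0})) (U : Ordinal.{0} → Set (Set Ordinal.{0}))
    (A : Ordinal.{0} → Ordinal.{0} → Set Ordinal.{0})
    (f g : Ordinal.{0} → Ordinal.{0} → Ordinal.{0})
    -- (α) κ = cf(λ) < λ
    (hcof : lam.ord.cof = κ) (hκlt : κ < lam)
    -- (β) E is a uniform ultrafilter on κ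
    (hE : IsUltrafilterOn (Set.Iio κ.ord) E)
    (hEuni : ∀ Y ∈ E, cardEQ Y κ)
    -- (γ) λ is a strong limit cardinal
    (hsl : lam.IsStrongLimit)
    -- (δ) ⟨λ_i : i < κ⟩ strictly increasing regular cardinals tending to λ
    (hreg : ∀ i < κ.ord, (lam_ i).IsRegular)
    (hmono : ∀ i j, i < j → j < κ.ord → lam_ i < lam_ j)
    (hlt : ∀ i < κ.ord, lam_ i < lam)
    (hcofinal : ∀ c < lam, ∃ i < κ.ord, c ≤ lam_ i)
    -- (ε) U_i is a uniform ultrafilter on λ_i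
    (hU : ∀ i < κ.ord, IsUltrafilterOn (Set.Iio (lam_ i).ord) (U i))
    (hUuni : ∀ i < κ.ord, ∀ X ∈ U i, cardEQ X (lam_ i))
    -- (ζ) U_i is generated by the ⊆*-decreasing sequence ⟨A i α : α < θ i⟩
    (hAmem : ∀ i < κ.ord, ∀ α < (θ i).ord, A i α ∈ U i)
    (hAdec : ∀ i < κ.ord, ∀ α α', α < α' → α' < (θ i).ord →
      cardLT (A i α' \ A i α) (lam_ i))
    (hAgen : ∀ i < κ.ord, ∀ B ∈ U i, ∃ α < (θ i).ord, cardLT (A i α \ B) (lam_ i))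
    -- (η) χ_λ̄ = tcf(∏ λ_i, <_E) and χ_θ̄ = tcf(∏ θ_i, <_E), witnessed by scales
    (hf : ∀ α < χlam.ord, ∀ i < κ.ord, f α i < (lam_ i).ord)
    (hfcof : ∀ h : Ordinal.{0} → Ordinal.{0}, (∀ i < κ.ord, h i < (lam_ i).ord) →
      ∃ α < χlam.ord, {i | i < κ.ord ∧ h i < f α i} ∈ E)
    (hg : ∀ β < χθ.ord, ∀ i < κ.ord, g β i < (θ i).ord)
    (hgcof : ∀ h : Ordinal.{0} → Ordinal.{0}, (∀ i < κ.ord, h i < (θ i).ord) →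
      ∃ β < χθ.ord, {i | i < κ.ord ∧ h i < g β i} ∈ E) :
    (∀ X, X ⊆ Set.Iio lam.ord →
      (∃ α < χlam.ord, ∃ β < χθ.ord, ∃ Y ∈ E, Bset lam_ A f g α β Y ⊆ X) ∨
      (∃ α < χlam.ord, ∃ β < χθ.ord, ∃ Y ∈ E, Bset lam_ A f g α β Y ⊆ Set.Iio lam.ord \ X)) ∧
    IsUltrafilterOn (Set.Iio lam.ord)
      {X | X ⊆ Set.Iio lam.ord ∧
        ∃ α < χlam.ord, ∃ β < χθ.ord, ∃ Y ∈ E, Bset lam_ A f g α β Y ⊆ X} := by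
  have hκ : ℵ₀ ≤ κ := hcof ▸ Ordinal.aleph0_le_cof_iff.2
    (Ordinal.one_lt_cof_iff.2 (isSuccLimit_ord hsl.aleph0_le))
  have hpiece : ∀ α < χlam.ord, ∀ β < χθ.ord, ∀ i < κ.ord,
      A i (g β i) ∩ Ioo (f α i) (lam_ i).ord ∈ U i := fun α hα β hβ i hi =>
    (hU i hi).2.2.2.1 _ (hAmem i hi _ (hg β hβ i hi)) _
      ((hU i hi).Ioo_mem (hUuni i hi) (hreg i hi).aleph0_le (hf α hα i hi))
  have hrefine := piecesRefine_of_scales hE hU hreg hAdec hAgen hfcof hg hgcof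
  have hdich := fun X (_ : X ⊆ Iio lam.ord) => Bset_dichotomy hrefine hE hU hlt X
  obtain ⟨Y₀, hY₀, hblock⟩ :=
    exists_mem_forall_Ico_lamlt_mem hE hEuni hκ hU hUuni hreg hmono (hcofinal κ hκlt)
  let ℬ := {B | ∃ α < χlam.ord, ∃ β < χθ.ord, ∃ Y ∈ E, Bset lam_ A f g α β Y = B}
  have hℬ : ∀ X, (∃ B ∈ ℬ, B ⊆ X) ↔
      ∃ α < χlam.ord, ∃ β < χθ.ord, ∃ Y ∈ E, Bset lam_ A f g α β Y ⊆ X := fun X =>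
    ⟨fun ⟨_, ⟨α, hα, β, hβ, Y, hY, hB⟩, h⟩ => ⟨α, hα, β, hβ, Y, hY, hB ▸ h⟩,
      fun ⟨α, hα, β, hβ, Y, hY, h⟩ => ⟨_, ⟨α, hα, β, hβ, Y, hY, rfl⟩, h⟩⟩
  have hbase := IsUltrafilterOn.of_base (S := Iio lam.ord) (ℬ := ℬ) ?_ ?_
    (by simpa only [hℬ] using hdich)
  · exact ⟨hdich, by simpa only [hℬ] using hbase⟩
  · rintro _ ⟨α, hα, β, hβ, Y, hY, rfl⟩
    exact Bset_nonempty hE hU (hpiece α hα β hβ) hY₀ hblock hY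
  · rintro _ ⟨α₁, hα₁, β₁, hβ₁, Y₁, hY₁, rfl⟩ _ ⟨α₂, hα₂, β₂, hβ₂, Y₂, hY₂, rfl⟩
    obtain ⟨α, hα, β, hβ, Y, hY, hsub⟩ :=
      Bset_directed hrefine hE hU (hpiece α₁ hα₁ β₁ hβ₁) (hpiece α₂ hα₂ β₂ hβ₂) hY₁ hY₂
    exact ⟨_, ⟨α, hα, β, hβ, Y, hY, rfl⟩, hsub⟩

/-- under the hypotheses of the main theorem, for every `X ⊆ λ`
either some `B_{α,β,Y} ∈ ℬ` is contained in `X` or some `B_{α,β,Y} ∈ ℬ` is contained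
in `λ \ X`; hence the filter generated by `ℬ` is an ultrafilter on `λ`. -/
theorem stmt7 (lam κ χlam χθ : Cardinal.{0})
    (lam_ θ : Ordinal.{0} → Cardinal.{0})
    (E : Set (Set Ordinal.{0})) (U : Ordinal.{0} → Set (Set Ordinal.{0}))
    (A : Ordinal.{0} → Ordinal.{0} → Set Ordinal.{0})
    (f g : Ordinal.{0} → Ordinal.{0} → Ordinal.{0})
    -- (α) κ = cf(λ) < λ
    (hcof : lam.ord.cof = κ) (hκlt : κ < lam)
    -- (β) E is a uniform ultrafilter on κ
    (hE : IsUltrafilterOn (Set.Iio κ.ord) E)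
    (hEuni : ∀ Y ∈ E, cardEQ Y κ)
    -- (γ) λ is a strong limit cardinal
    (hsl : lam.IsStrongLimit)
    -- (δ) ⟨λ_i : i < κ⟩ strictly increasing regular cardinals tending to λ
    (hreg : ∀ i < κ.ord, (lam_ i).IsRegular)
    (hmono : ∀ i j, i < j → j < κ.ord → lam_ i < lam_ j)
    (hlt : ∀ i < κ.ord, lam_ i < lam)
    (hcofinal : ∀ c < lam, ∃ i < κ.ord, c ≤ lam_ i)
    -- (ε) U_i is a uniform ultrafilter on λ_i
    (hU : ∀ i < κ.ord, IsUltrafilterOn (Set.Iio (lam_ i).ord) (U i))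
    (hUuni : ∀ i < κ.ord, ∀ X ∈ U i, cardEQ X (lam_ i))
    -- (ζ) U_i is generated by the ⊆*-decreasing sequence ⟨A i α : α < θ i⟩
    (hAmem : ∀ i < κ.ord, ∀ α < (θ i).ord, A i α ∈ U i)
    (hAdec : ∀ i < κ.ord, ∀ α α', α < α' → α' < (θ i).ord →
      cardLT (A i α' \ A i α) (lam_ i))
    (hAgen : ∀ i < κ.ord, ∀ B ∈ U i, ∃ α < (θ i).ord, cardLT (A i α \ B) (lam_ i))
    -- (η) χ_λ̄ = tcf(∏ λ_i, <_E) and χ_θ̄ = tcf(∏ θ_i, <_E), witnessed by scales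
    (hχlam : χlam.IsRegular) (hχθ : χθ.IsRegular)
    (hf : ∀ α < χlam.ord, ∀ i < κ.ord, f α i < (lam_ i).ord)
    (hfinc : ∀ α α', α < α' → α' < χlam.ord → {i | i < κ.ord ∧ f α i < f α' i} ∈ E)
    (hfcof : ∀ h : Ordinal.{0} → Ordinal.{0}, (∀ i < κ.ord, h i < (lam_ i).ord) →
      ∃ α < χlam.ord, {i | i < κ.ord ∧ h i < f α i} ∈ E)
    (hg : ∀ β < χθ.ord, ∀ i < κ.ord, g β i < (θ i).ord)
    (hginc : ∀ β β', β < β' → β' < χθ.ord → {i | i < κ.ord ∧ g β i < g β' i} ∈ E)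
    (hgcof : ∀ h : Ordinal.{0} → Ordinal.{0}, (∀ i < κ.ord, h i < (θ i).ord) →
      ∃ β < χθ.ord, {i | i < κ.ord ∧ h i < g β i} ∈ E) :
    (∀ X, X ⊆ Set.Iio lam.ord →
      (∃ α < χlam.ord, ∃ β < χθ.ord, ∃ Y ∈ E, Bset lam_ A f g α β Y ⊆ X) ∨
      (∃ α < χlam.ord, ∃ β < χθ.ord, ∃ Y ∈ E, Bset lam_ A f g α β Y ⊆ Set.Iio lam.ord \ X)) ∧
    IsUltrafilterOn (Set.Iio lam.ord)
      {X | X ⊆ Set.Iio lam.ord ∧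
        ∃ α < χlam.ord, ∃ β < χθ.ord, ∃ Y ∈ E, Bset lam_ A f g α β Y ⊆ X} :=
  stmt7_general lam κ χlam χθ lam_ θ E U A f g hcof hκlt hE hEuni hsl hreg hmono hlt hcofinal hU
    hUuni hAmem hAdec hAgen hf hfcof hg hgcof
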